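/- arXiv:2206.12378 — 3 statements merged into one kernel-verified Lean document; each statement's English description precedes it below -/
import Mathlib

section
/- For a sequence of i.i.d. uniform draws from {1,…,n}, the probability that each of the first h−1 draws after an initial set of k distinct marked elements hits a previously unmarked element (each drawn element becoming marked) and the h-th relevant event is hitting a marked element, i.e., the probability that a geometrically growing marked set of initial size k grows by exactly h before a repeat, is (k+h)(n−k−1)!/(n^h (n−k−h)!), and these probabilities sum to 1 over h = 1,…,n−k. -/
/-!
With `m = n - k - 1`, the `h`-th probability is `G (h - 1) - G h` where
`G h = m.descFactorial h / n ^ h = (m / n) ((m - 1) / n) ⋯ ((m - h + 1) / n)`,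
so the sum telescopes to `G 0 - G (m + 1) = 1 - 0`.
-/

open Finset

theorem sum_range_sub_mul_descFactorial_div_pow_eq_one {K : Type*} [Field K] (m : ℕ) {x : K}
    (hx : x ≠ 0) :
    ∑ h ∈ range (m + 1), (x - (m - h : ℕ)) * m.descFactorial h / x ^ (h + 1) = 1 := by
  have telescope : ∀ h, (x - (m - h : ℕ)) * m.descFactorial h / x ^ (h + 1)
      = m.descFactorial h / x ^ h - m.descFactorial (h + 1) / x ^ (h + 1) := by
    intro h
    rw [Nat.descFactorial_succ, Nat.cast_mul]
    field_simp
    ring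
  rw [sum_congr rfl fun h _ => telescope h, sum_range_sub',
    Nat.descFactorial_eq_zero_iff_lt.mpr m.lt_succ_self]
  simp

/-- Normalization of the branch-size distribution: for `1 ≤ k ≤ n−1`, the probabilities
`p(h) = (k+h)(n−k−1)!/(n^h (n−k−h)!)` of a marked set of initial size `k` growing by
exactly `h` before the first repeated draw sum to `1` over `h = 1,…,n−k`. -/
theorem stmt1 (n k : ℕ) (hk1 : 1 ≤ k) (hk2 : k ≤ n - 1) :
    ∑ h ∈ Finset.Icc 1 (n - k),
        ((k : ℝ) + h) * (n - k - 1).factorial / ((n : ℝ) ^ h * (n - k - h).factorial)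
      = 1 := by
  obtain ⟨m, rfl⟩ : ∃ m, n = k + m + 1 := ⟨n - k - 1, by omega⟩
  rw [show k + m + 1 - k = m + 1 by omega, ← Ico_add_one_right_eq_Icc, sum_Ico_eq_sum_range,
    Nat.add_sub_cancel, Nat.add_sub_cancel,
    ← sum_range_sub_mul_descFactorial_div_pow_eq_one m (x := ((k + m + 1 : ℕ) : ℝ))
      (by positivity)]
  refine sum_congr rfl fun h hh => ?_
  have hhm : h ≤ m := Nat.lt_succ_iff.mp (mem_range.mp hh)
  rw [show m + 1 - (1 + h) = m - h by omega, ← Nat.factorial_mul_descFactorial hhm]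
  push_cast [hhm]
  field_simp
  ring
end

section
/- For any finite connected graph G: ω(G) − φ(G) = ∑_{{u,v} ∈ E} (1/|E|) · E_v[h_u] · ∑_{i ∈ V} π(i) · P_i(h_v < h_u), where ω(G) = ∑_{j} π(j) E_i[h_j] is the mean hitting time (independent of i under stationary averaging as defined) and φ(G) = ∑_i ∑_{{u,v}∈E} π(i)·(1/|E|)·E_i[h_{{u,v}}] is the mean edge-hitting time. -/
open Finset

private lemma harmonic_le_zero {V : Type*} [Fintype V] [DecidableEq V] (G : SimpleGraph V)
    [DecidableRel G.Adj] (hG : G.Connected) (u v : V)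
    (g : V → ℝ) (hgu : g u = 0) (hgv : g v = 0)
    (hg : ∀ i, i ≠ u → i ≠ v → g i = (∑ j ∈ G.neighborFinset i, g j) / (G.degree i)) :
    ∀ i, g i ≤ 0 := by
  have walkzero : ∀ {a b : V} (_ : G.Walk a b), g b = 0 → (∀ j, g j ≤ g a) → g a = 0 := by
    intro a b w
    induction w with
    | nil => intro h _; exact h
    | @cons a b c hab w ih =>
      intro hend hmax
      by_cases hau : a = u
      · rw [hau]; exact hgu
      by_cases hav : a = v
      · rw [hav]; exact hgv
      have hb : b ∈ G.neighborFinset a := by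
        rw [SimpleGraph.mem_neighborFinset]; exact hab
      have hdeg : (0:ℝ) < G.degree a := by
        exact_mod_cast (G.degree_pos_iff_exists_adj a).2 ⟨b, hab⟩
      have hsum : ∑ j ∈ G.neighborFinset a, g j = ∑ j ∈ G.neighborFinset a, g a := by
        have h1 := hg a hau hav
        rw [eq_div_iff (ne_of_gt hdeg)] at h1
        rw [← h1, Finset.sum_const, G.card_neighborFinset_eq_degree, nsmul_eq_mul]
        ring
      have heq := (Finset.sum_eq_sum_iff_of_le (fun j _ => hmax j)).1 hsum
      have hba : g b = g a := heq b hb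
      have := ih hend (fun j => hba ▸ hmax j)
      rw [← hba]; exact this
  intro i
  have : Nonempty V := hG.nonempty
  obtain ⟨m, hm⟩ := Finite.exists_max g
  obtain ⟨w⟩ := hG.preconnected m u
  have hm0 : g m = 0 := walkzero w hgu hm
  exact (hm i).trans (le_of_eq hm0)

private lemma rw_harmonic_zero {V : Type*} [Fintype V] [DecidableEq V] (G : SimpleGraph V)
    [DecidableRel G.Adj] (hG : G.Connected) (u v : V)
    (f : V → ℝ) (hu : f u = 0) (hv : f v = 0)
    (hf : ∀ i, i ≠ u → i ≠ v → f i = (∑ j ∈ G.neighborFinset i, f j) / (G.degree i)) :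
    ∀ i, f i = 0 := by
  intro i
  have h1 := harmonic_le_zero G hG u v f hu hv hf i
  have h2 := harmonic_le_zero G hG u v (fun j => -f j) (by simp [hu]) (by simp [hv])
    (fun j hju hjv => by
      simp only [Finset.sum_neg_distrib, neg_div, neg_inj]
      exact hf j hju hjv) i
  simp only [neg_nonpos] at h2
  linarith

/-- For the simple random walk on a finite connected graph `G` with stationary
distribution `π(i) = deg(i)/(2|E|)`:
`ω(G) − φ(G) = ∑_{{u,v}∈E} (1/|E|)·E_v[h_u]·∑_i π(i)·P_i(h_v < h_u)`,
where `ω(G) = ∑_{i,j} π(i)π(j)E_i[h_j]` is the mean hitting time and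
`φ(G) = ∑_i ∑_{{u,v}∈E} π(i)·(1/|E|)·E_i[h_{{u,v}}]` is the mean edge-hitting time.
Sums over unordered edges `{u,v}` are written as sums over ordered adjacent pairs with
an extra factor `1/2`.  Hitting times and crossing probabilities are characterized by
their first-step Dirichlet equations: `H u i = E_i[h_u]`, `K u v i = E_i[h_{{u,v}}]`
(symmetric in `u,v`), and `p u v i = P_i(h_v < h_u)`. -/
theorem stmt14 {V : Type*} [Fintype V] [DecidableEq V] (G : SimpleGraph V)
    [DecidableRel G.Adj] (hG : G.Connected)
    (H : V → V → ℝ) (K : V → V → V → ℝ) (p : V → V → V → ℝ)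
    (hH : ∀ u, H u u = 0 ∧
      ∀ i, i ≠ u → H u i = 1 + (∑ j ∈ G.neighborFinset i, H u j) / (G.degree i))
    (hK : ∀ u v, G.Adj u v → K u v u = 0 ∧ K u v v = 0 ∧ K u v = K v u ∧
      ∀ i, i ≠ u → i ≠ v →
        K u v i = 1 + (∑ j ∈ G.neighborFinset i, K u v j) / (G.degree i))
    (hp : ∀ u v, G.Adj u v → p u v u = 0 ∧ p u v v = 1 ∧
      ∀ i, i ≠ u → i ≠ v →
        p u v i = (∑ j ∈ G.neighborFinset i, p u v j) / (G.degree i))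
    (π : V → ℝ) (hπ : ∀ i, π i = (G.degree i : ℝ) / (2 * G.edgeFinset.card)) :
    (∑ i, ∑ j, π i * π j * H j i)
      - (∑ i, ∑ u, ∑ v ∈ G.neighborFinset u,
          π i * (1 / (2 * (G.edgeFinset.card : ℝ))) * K u v i)
    = ∑ u, ∑ v ∈ G.neighborFinset u,
        (1 / (2 * (G.edgeFinset.card : ℝ))) * H u v * ∑ i, π i * p u v i := by
  set c : ℝ := 1 / (2 * (G.edgeFinset.card : ℝ)) with hc
  -- Key identity: K u v i = H u i - H u v * p u v i for adjacent u v
  have keyK : ∀ u v, G.Adj u v → ∀ i, K u v i = H u i - H u v * p u v i := by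
    intro u v huv
    obtain ⟨hKu, hKv, _, hKh⟩ := hK u v huv
    obtain ⟨hpu, hpv, hph⟩ := hp u v huv
    obtain ⟨hHu, hHh⟩ := hH u
    have main := rw_harmonic_zero G hG u v
      (fun i => H u i - H u v * p u v i - K u v i)
      (by simp [hHu, hpu, hKu])
      (by simp [hpv, hKv])
      (fun i hiu hiv => by
        rw [hHh i hiu, hKh i hiu hiv, hph i hiu hiv,
          Finset.sum_sub_distrib, Finset.sum_sub_distrib, ← Finset.mul_sum]
        ring)
    intro i
    have := main i
    linarith
  -- Rewrite the K-sum
  have hB : (∑ i, ∑ u, ∑ v ∈ G.neighborFinset u, π i * c * K u v i)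
      = (∑ i, ∑ u, π i * π u * H u i)
        - ∑ i, ∑ u, ∑ v ∈ G.neighborFinset u, π i * c * (H u v * p u v i) := by
    rw [← Finset.sum_sub_distrib]
    refine Finset.sum_congr rfl fun i _ => ?_
    rw [← Finset.sum_sub_distrib]
    refine Finset.sum_congr rfl fun u _ => ?_
    have step : ∑ v ∈ G.neighborFinset u, π i * c * K u v i
        = ∑ v ∈ G.neighborFinset u, (π i * c * H u i - π i * c * (H u v * p u v i)) := by
      refine Finset.sum_congr rfl fun v hv => ?_
      rw [keyK u v ((SimpleGraph.mem_neighborFinset G u v).1 hv) i]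
      ring
    rw [step, Finset.sum_sub_distrib, Finset.sum_const, G.card_neighborFinset_eq_degree,
      nsmul_eq_mul]
    have hπu : (G.degree u : ℝ) * (π i * c * H u i) = π i * π u * H u i := by
      rw [hπ u, hc]; ring
    rw [hπu]
  rw [hB]
  have hA : (∑ i, ∑ j, π i * π j * H j i) = ∑ i, ∑ u, π i * π u * H u i := rfl
  rw [hA]
  ring_nf
  -- Now goal: ∑ i ∑ u ∑ v π i * c * (H u v * p u v i) = RHS (up to ring_nf forms)
  rw [Finset.sum_comm]
  refine Finset.sum_congr rfl fun u _ => ?_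
  rw [Finset.sum_comm]
  refine Finset.sum_congr rfl fun v _ => ?_
  rw [Finset.mul_sum]
  refine Finset.sum_congr rfl fun i _ => ?_
  ring
end

section
/- Consider drawing balls uniformly at random with replacement from an urn with n labelled balls. The expected number of draws until the first repeated ball (first draw of a previously drawn ball) is √(πn/2) + Θ(1) as n → ∞; more precisely, it equals ∑_{k=0}^{n} n!/((n−k)!·n^k) and this quantity is asymptotic to √(πn/2). -/
/-!
Expanding `(1 + x/n)^n` binomially and using `∫₀^∞ e^{-x} x^k dx = k!` turns the sum into
`∫₀^∞ e^{-x} (1 + x/n)^n dx`. After the substitution `x = √n y` the integrand becomes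
`exp (n (log (1 + u) - u))` with `u = y/√n`, and the elementary bounds
`-u²/(u+2) ≤ log (1 + u) - u ≤ -u²/(2(1+u))` show both that it tends to `e^{-y²/2}` and that it
is dominated by `e^{(1-y)/2}`. Dominated convergence then gives `√n · √(π/2)` asymptotically.
-/

open Finset Filter Set Real MeasureTheory Topology
open scoped Nat

namespace Real

lemma log_le_sub_inv_div_two {x : ℝ} (hx : 1 ≤ x) : log x ≤ (x - x⁻¹) / 2 := by
  rw [← sinh_log (by positivity)]
  exact self_le_sinh_iff.2 (log_nonneg hx)

lemma neg_sq_div_add_two_le_log_one_add_sub {u : ℝ} (hu : 0 ≤ u) :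
    -(u ^ 2 / (u + 2)) ≤ log (1 + u) - u := by
  have h := le_log_one_add_of_nonneg hu
  have : 2 * u / (u + 2) - u = -(u ^ 2 / (u + 2)) := by field_simp; ring
  linarith

lemma log_one_add_sub_le_neg_sq_div {u : ℝ} (hu : 0 ≤ u) :
    log (1 + u) - u ≤ -(u ^ 2 / (2 * (1 + u))) := by
  have h := log_le_sub_inv_div_two (by linarith : 1 ≤ 1 + u)
  have : (1 + u - (1 + u)⁻¹) / 2 - u = -(u ^ 2 / (2 * (1 + u))) := by field_simp; ring
  linarith

end Real

/-- Logarithm of the integrand `e^{-x} (1 + x/c²)^{c²}` after the substitution `x = c y`. -/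
noncomputable def scaledLogIntegrand (c y : ℝ) : ℝ := c ^ 2 * (log (1 + y / c) - y / c)

section ScaledLogIntegrand

variable {c y : ℝ}

lemma neg_sq_div_le_scaledLogIntegrand (hc : 0 < c) (hy : 0 ≤ y) :
    -(y ^ 2 / (y / c + 2)) ≤ scaledLogIntegrand c y := by
  have h := neg_sq_div_add_two_le_log_one_add_sub (div_nonneg hy hc.le)
  calc -(y ^ 2 / (y / c + 2)) = c ^ 2 * -((y / c) ^ 2 / (y / c + 2)) := by field_simp
    _ ≤ _ := by unfold scaledLogIntegrand; gcongr

lemma scaledLogIntegrand_le_neg_sq_div (hc : 0 < c) (hy : 0 ≤ y) :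
    scaledLogIntegrand c y ≤ -(y ^ 2 / (2 * (1 + y / c))) := by
  have h := log_one_add_sub_le_neg_sq_div (div_nonneg hy hc.le)
  calc scaledLogIntegrand c y ≤ c ^ 2 * -((y / c) ^ 2 / (2 * (1 + y / c))) := by
        unfold scaledLogIntegrand; gcongr
    _ = -(y ^ 2 / (2 * (1 + y / c))) := by field_simp

lemma scaledLogIntegrand_le_one_sub_div_two (hc : 1 ≤ c) (hy : 0 ≤ y) :
    scaledLogIntegrand c y ≤ (1 - y) / 2 := by
  have hyc : y / c ≤ y := div_le_self hy hc
  calc scaledLogIntegrand c y ≤ -(y ^ 2 / (2 * (1 + y / c))) :=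
        scaledLogIntegrand_le_neg_sq_div (by linarith) hy
    _ ≤ -(y ^ 2 / (2 * (1 + y))) := by gcongr
    _ = (1 - y) / 2 - 1 / (2 * (1 + y)) := by field_simp; ring
    _ ≤ (1 - y) / 2 := sub_le_self _ (by positivity)

lemma tendsto_scaledLogIntegrand (hy : 0 ≤ y) :
    Tendsto (fun c => scaledLogIntegrand c y) atTop (𝓝 (-(y ^ 2 / 2))) := by
  have hu : Tendsto (fun c => y / c) atTop (𝓝 0) := tendsto_const_nhds.div_atTop tendsto_id
  have hlower : Tendsto (fun c => -(y ^ 2 / (y / c + 2))) atTop (𝓝 (-(y ^ 2 / 2))) := by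
    simpa using (tendsto_const_nhds.div (hu.add_const 2) (by norm_num)).neg
  have hupper : Tendsto (fun c => -(y ^ 2 / (2 * (1 + y / c)))) atTop (𝓝 (-(y ^ 2 / 2))) := by
    simpa using (tendsto_const_nhds.div ((hu.const_add 1).const_mul 2) (by norm_num)).neg
  refine tendsto_of_tendsto_of_tendsto_of_le_of_le' hlower hupper ?_ ?_ <;>
    filter_upwards [eventually_gt_atTop 0] with c hc
  exacts [neg_sq_div_le_scaledLogIntegrand hc hy, scaledLogIntegrand_le_neg_sq_div hc hy]

end ScaledLogIntegrand

lemma integrableOn_exp_neg_mul_pow (k : ℕ) :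
    IntegrableOn (fun x : ℝ => exp (-x) * x ^ k) (Ioi 0) := by
  refine (GammaIntegral_convergent (s := k + 1) (by positivity)).congr_fun (fun x _ => ?_)
    measurableSet_Ioi
  simp [rpow_natCast]

lemma integral_exp_neg_mul_pow (k : ℕ) : ∫ x in Ioi (0 : ℝ), exp (-x) * x ^ k = k ! := by
  rw [← Gamma_nat_eq_factorial, Gamma_eq_integral (by positivity)]
  refine setIntegral_congr_fun measurableSet_Ioi (fun x _ => ?_)
  simp [rpow_natCast]

lemma sum_factorial_div_eq_integral (n : ℕ) (a : ℝ) :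
    ∑ t ∈ range (n + 1), (n ! : ℝ) / ((n - t)! * a ^ t) =
      ∫ x in Ioi (0 : ℝ), exp (-x) * (1 + x / a) ^ n := by
  have hexpand (x : ℝ) : exp (-x) * (1 + x / a) ^ n =
      ∑ t ∈ range (n + 1), (n.choose t / a ^ t) * (exp (-x) * x ^ t) := by
    rw [add_comm, add_pow, mul_sum]
    refine sum_congr rfl fun t _ => ?_
    rw [div_pow]
    ring
  simp_rw [hexpand]
  rw [integral_finsetSum _ fun t _ => (integrableOn_exp_neg_mul_pow t).const_mul _]
  refine sum_congr rfl fun t ht => ?_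
  rw [integral_const_mul, integral_exp_neg_mul_pow,
    Nat.cast_choose ℝ (Nat.lt_succ_iff.1 (mem_range.1 ht))]
  field_simp

lemma exp_neg_mul_mul_one_add_div_pow {n : ℕ} {c y : ℝ} (hc : 0 < c) (hn : (n : ℝ) = c ^ 2)
    (hy : 0 ≤ y) : exp (-(c * y)) * (1 + c * y / n) ^ n = exp (scaledLogIntegrand c y) := by
  have hcy : c * y / n = y / c := by rw [hn]; field_simp
  rw [scaledLogIntegrand, ← hn, mul_sub, exp_sub, exp_nat_mul, exp_log (by positivity), hcy,
    show (n : ℝ) * (y / c) = c * y by rw [hn]; field_simp, exp_neg]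
  ring

lemma integral_exp_neg_mul_one_add_div_pow {n : ℕ} (hn : 0 < n) :
    ∫ x in Ioi (0 : ℝ), exp (-x) * (1 + x / n) ^ n =
      √n * ∫ y in Ioi (0 : ℝ), exp (scaledLogIntegrand √n y) := by
  have hc : 0 < √(n : ℝ) := sqrt_pos.2 (by exact_mod_cast hn)
  have hsubst := integral_comp_mul_left_Ioi (fun x => exp (-x) * (1 + x / n) ^ n) 0 hc
  rw [mul_zero, smul_eq_mul] at hsubst
  rw [← setIntegral_congr_fun measurableSet_Ioi fun y (hy : 0 < y) =>
    exp_neg_mul_mul_one_add_div_pow hc (sq_sqrt n.cast_nonneg).symm hy.le, hsubst,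
    mul_inv_cancel_left₀ hc.ne']

lemma integral_exp_neg_sq_div_two : ∫ y in Ioi (0 : ℝ), exp (-(y ^ 2 / 2)) = √(π / 2) := by
  have h := integral_gaussian_Ioi (1 / 2)
  rw [show π / (1 / 2) = 2 ^ 2 * (π / 2) by ring, sqrt_mul (by positivity),
    sqrt_sq (by norm_num)] at h
  simp_rw [show ∀ y : ℝ, -(y ^ 2 / 2) = -(1 / 2) * y ^ 2 from fun y => by ring]
  linarith

lemma tendsto_integral_exp_scaledLogIntegrand :
    Tendsto (fun n : ℕ => ∫ y in Ioi (0 : ℝ), exp (scaledLogIntegrand √n y)) atTop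
      (𝓝 √(π / 2)) := by
  rw [← integral_exp_neg_sq_div_two]
  have hsqrt : Tendsto (fun n : ℕ => √(n : ℝ)) atTop atTop :=
    tendsto_sqrt_atTop.comp tendsto_natCast_atTop_atTop
  refine tendsto_integral_filter_of_dominated_convergence (fun y => exp ((1 - y) / 2))
    (Eventually.of_forall fun n => ?_) ?_ ?_ ?_
  · unfold scaledLogIntegrand
    fun_prop
  · filter_upwards [hsqrt.eventually_ge_atTop 1] with n hn
    filter_upwards [ae_restrict_mem measurableSet_Ioi] with y (hy : 0 < y)
    rw [norm_of_nonneg (exp_pos _).le, exp_le_exp]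
    exact scaledLogIntegrand_le_one_sub_div_two hn hy.le
  · have h : IntegrableOn (fun y => exp (1 / 2) * exp (-(1 / 2) * y)) (Ioi 0) :=
      (exp_neg_integrableOn_Ioi 0 (by norm_num : (0 : ℝ) < 1 / 2)).const_mul _
    refine h.congr_fun (fun y _ => ?_) measurableSet_Ioi
    simp only [← exp_add]
    ring_nf
  · filter_upwards [ae_restrict_mem measurableSet_Ioi] with y (hy : 0 < y)
    exact (continuous_exp.tendsto _).comp ((tendsto_scaledLogIntegrand hy.le).comp hsqrt)

/-- Birthday-problem expectation: for i.i.d. uniform draws from `{1,…,n}`, the expected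
number of draws until the first repeated ball is `E[R] = ∑_{t=0}^{n} n!/((n−t)!·n^t)`
(since `P(R > t) = n!/((n−t)!·n^t)`), and this quantity is asymptotic to `√(πn/2)`
as `n → ∞`. -/
theorem stmt18 :
    Tendsto
      (fun n : ℕ =>
        (∑ t ∈ Finset.range (n + 1),
            (n.factorial : ℝ) / ((n - t).factorial * (n : ℝ) ^ t)) /
          Real.sqrt (Real.pi * n / 2))
      atTop (nhds 1) := by
  have hlim := tendsto_integral_exp_scaledLogIntegrand.div_const √(π / 2)
  rw [div_self (sqrt_pos.2 (by positivity)).ne'] at hlim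
  refine hlim.congr' ?_
  filter_upwards [eventually_gt_atTop 0] with n hn
  have hc : 0 < √(n : ℝ) := sqrt_pos.2 (by exact_mod_cast hn)
  rw [sum_factorial_div_eq_integral, integral_exp_neg_mul_one_add_div_pow hn,
    show π * n / 2 = n * (π / 2) by ring, sqrt_mul n.cast_nonneg, mul_div_mul_left _ _ hc.ne']
end
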